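/- Let N ≥ 2 and let ν ∈ ℝ^N be a unit vector. For every smooth compactly supported function u ∈ C_c^∞(ℝ^N) whose support is contained in the open half-space {x ∈ ℝ^N : x·ν > 0}, one has ∫ |∇u(x)|² dx ≥ (N²/4) ∫ |x|^{-2} |u(x)|² dx. -/

import Mathlib

open MeasureTheory Metric Real RealInnerProductSpace

private lemma integral_lineDeriv_zero {N : ℕ} {g : EuclideanSpace ℝ (Fin N) → ℝ} {D : NNReal}
    (hg : LipschitzWith D g) (h'g : HasCompactSupport g) (v : EuclideanSpace ℝ (Fin N)) :
    ∫ x, lineDeriv ℝ g x v = 0 := by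
  have h := LipschitzWith.integral_lineDeriv_mul_eq (μ := volume)
      (LipschitzWith.const (1:ℝ)) hg h'g (-v)
  have h0 : ∀ x : EuclideanSpace ℝ (Fin N), lineDeriv ℝ (fun _ => (1:ℝ)) x (-v) = 0 := by
    intro x; simp [lineDeriv]
  simp only [h0, zero_mul, integral_zero, neg_neg, mul_one] at h
  exact h.symm

private lemma sum_apply_single {N : ℕ} (a : EuclideanSpace ℝ (Fin N) →L[ℝ] ℝ)
    (v : EuclideanSpace ℝ (Fin N)) :
    ∑ i, a (EuclideanSpace.single i 1) * v i = a v := by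
  have hv : ∑ i, v i • EuclideanSpace.single i (1:ℝ) = v := by
    have := (EuclideanSpace.basisFun (Fin N) ℝ).sum_repr v
    simpa [EuclideanSpace.basisFun_repr, EuclideanSpace.basisFun_apply] using this
  conv_rhs => rw [← hv]
  rw [map_sum]
  refine Finset.sum_congr rfl fun i _ => ?_
  rw [_root_.map_smul]; simp [mul_comm]


section TraceHelpers

variable {N : ℕ}

private noncomputable def tr (L : EuclideanSpace ℝ (Fin N) →L[ℝ] EuclideanSpace ℝ (Fin N)) : ℝ :=
  ∑ i, L (EuclideanSpace.single i 1) i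

private lemma tr_add (L M : EuclideanSpace ℝ (Fin N) →L[ℝ] EuclideanSpace ℝ (Fin N)) :
    tr (L + M) = tr L + tr M := by
  simp [tr, ContinuousLinearMap.add_apply, PiLp.add_apply, Finset.sum_add_distrib]

private lemma tr_sub (L M : EuclideanSpace ℝ (Fin N) →L[ℝ] EuclideanSpace ℝ (Fin N)) :
    tr (L - M) = tr L - tr M := by
  simp [tr, ContinuousLinearMap.sub_apply, PiLp.sub_apply, Finset.sum_sub_distrib]

private lemma tr_smul (a : ℝ) (L : EuclideanSpace ℝ (Fin N) →L[ℝ] EuclideanSpace ℝ (Fin N)) :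
    tr (a • L) = a * tr L := by
  simp [tr, ContinuousLinearMap.smul_apply, PiLp.smul_apply, smul_eq_mul, Finset.mul_sum]

private lemma tr_smulRight (c : EuclideanSpace ℝ (Fin N) →L[ℝ] ℝ) (v : EuclideanSpace ℝ (Fin N)) :
    tr (c.smulRight v) = c v := by
  simp only [tr, ContinuousLinearMap.smulRight_apply, PiLp.smul_apply, smul_eq_mul]
  exact sum_apply_single c v

private lemma tr_id : tr (ContinuousLinearMap.id ℝ (EuclideanSpace ℝ (Fin N))) = N := by
  simp [tr, EuclideanSpace.single_apply]

end TraceHelpers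

set_option maxHeartbeats 2000000 in
/-- Hardy inequality on a half-space: for smooth compactly supported `u` with support
in the open half-space `{x | ⟪x, ν⟫ > 0}`, one has
`∫ |∇u|² ≥ (N²/4) ∫ |x|⁻² |u|²`. -/
theorem hardy_halfspace (N : ℕ) (hN : 2 ≤ N)
    (ν : EuclideanSpace ℝ (Fin N)) (hν : ‖ν‖ = 1)
    (u : EuclideanSpace ℝ (Fin N) → ℝ) (hu : ContDiff ℝ (⊤ : ℕ∞) u)
    (hcs : HasCompactSupport u)
    (hsupp : tsupport u ⊆ {x : EuclideanSpace ℝ (Fin N) | 0 < ⟪x, ν⟫}) :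
    ((N : ℝ) ^ 2 / 4) * ∫ x, (u x) ^ 2 / ‖x‖ ^ 2 ≤ ∫ x, ‖gradient u x‖ ^ 2 := by
  classical
  set c : ℝ := (N : ℝ) / 2 with hc
  set d : EuclideanSpace ℝ (Fin N) → ℝ := fun x => ⟪ν, x⟫ with hd
  set q : EuclideanSpace ℝ (Fin N) → ℝ := fun x => ⟪x, x⟫ with hq
  set W : EuclideanSpace ℝ (Fin N) → EuclideanSpace ℝ (Fin N) :=
    fun x => (d x)⁻¹ • ν - (c * (q x)⁻¹) • x with hW
  set F : EuclideanSpace ℝ (Fin N) → EuclideanSpace ℝ (Fin N) :=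
    fun x => (u x) ^ 2 • W x with hF
  have hqnorm : ∀ x : EuclideanSpace ℝ (Fin N), q x = ‖x‖ ^ 2 := fun x =>
    real_inner_self_eq_norm_sq x
  have hudiff : Differentiable ℝ u := hu.differentiable (by simp)
  -- every point is good (0 < d x) or u vanishes near it
  have hcover : ∀ x : EuclideanSpace ℝ (Fin N), 0 < d x ∨ u =ᶠ[nhds x] 0 := by
    intro x
    by_cases hx : x ∈ tsupport u
    · left; rw [hd]; exact lt_of_lt_of_eq (hsupp hx) (real_inner_comm ν x)
    · right; exact notMem_tsupport_iff_eventuallyEq.mp hx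
  -- for good points, positivity facts
  have hqpos : ∀ x : EuclideanSpace ℝ (Fin N), 0 < d x → 0 < q x := by
    intro x hx
    rcases eq_or_ne x 0 with rfl | h0
    · simp [hd] at hx
    · rw [hqnorm]; exact pow_pos (norm_pos_iff.mpr h0) 2
  -- smoothness of F
  have hdC : ContDiff ℝ (⊤ : ℕ∞) d := (contDiff_const (c := ν)).inner ℝ contDiff_id
  have hqC : ContDiff ℝ (⊤ : ℕ∞) q := (contDiff_id).inner ℝ contDiff_id
  have hFsm : ContDiff ℝ (⊤ : ℕ∞) F := by
    rw [contDiff_iff_contDiffAt]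
    intro x
    rcases hcover x with hx | hx
    · have hd0 : d x ≠ 0 := ne_of_gt hx
      have hq0 : q x ≠ 0 := ne_of_gt (hqpos x hx)
      rw [hF, hW]
      exact ((hu.contDiffAt).pow 2).smul
        (((hdC.contDiffAt.inv hd0).smul contDiffAt_const).sub
          ((contDiffAt_const.mul (hqC.contDiffAt.inv hq0)).smul contDiffAt_id))
    · have hFeq : F =ᶠ[nhds x] (fun _ => (0 : EuclideanSpace ℝ (Fin N))) :=
        hx.mono fun y hy => by simp [hF, hy]
      exact contDiffAt_const.congr_of_eventuallyEq hFeq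
  -- support of F
  have hFz : ∀ x ∉ tsupport u, F x = 0 := by
    intro x hx
    have : u x = 0 := image_eq_zero_of_notMem_tsupport hx
    simp [hF, this]
  have hFc : HasCompactSupport F := HasCompactSupport.intro hcs fun x hx => hFz x hx
  -- explicit derivative of F at good points
  have hFderiv : ∀ x : EuclideanSpace ℝ (Fin N), 0 < d x →
      ∑ i, (fderiv ℝ F x) (EuclideanSpace.single i 1) i
        = 2 * u x * (fderiv ℝ u x) (W x)
          + u x ^ 2 * (-((d x) ^ 2)⁻¹ - c * (q x)⁻¹ * N + 2 * c * (q x)⁻¹) := by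
    intro x hx
    have hd0 : d x ≠ 0 := ne_of_gt hx
    have hq0 : q x ≠ 0 := ne_of_gt (hqpos x hx)
    have hdF : HasFDerivAt d (innerSL ℝ ν) x := by
      rw [hd]; exact (innerSL ℝ ν).hasFDerivAt
    have hqF : HasFDerivAt q ((fderivInnerCLM ℝ (x, x)).comp
        ((ContinuousLinearMap.id ℝ _).prod (ContinuousLinearMap.id ℝ _))) x := by
      rw [hq]; exact (hasFDerivAt_id x).inner ℝ (hasFDerivAt_id x)
    have h1 : HasFDerivAt (fun y => (d y)⁻¹ • ν)
        (((-((d x) ^ 2)⁻¹) • innerSL ℝ ν).smulRight ν) x :=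
      ((hasDerivAt_inv hd0).comp_hasFDerivAt x hdF).smul_const ν
    have h2scal : HasFDerivAt (fun y => c * (q y)⁻¹)
        (c • ((-((q x) ^ 2)⁻¹) • ((fderivInnerCLM ℝ (x, x)).comp
          ((ContinuousLinearMap.id ℝ _).prod (ContinuousLinearMap.id ℝ _))))) x :=
      ((hasDerivAt_inv hq0).comp_hasFDerivAt x hqF).const_mul c
    have h2 : HasFDerivAt (fun y => (c * (q y)⁻¹) • y)
        ((c * (q x)⁻¹) • ContinuousLinearMap.id ℝ _ +
          (c • ((-((q x) ^ 2)⁻¹) • ((fderivInnerCLM ℝ (x, x)).comp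
            ((ContinuousLinearMap.id ℝ _).prod (ContinuousLinearMap.id ℝ _))))).smulRight x) x :=
      h2scal.smul (hasFDerivAt_id x)
    have hWF : HasFDerivAt W
        ((((-((d x) ^ 2)⁻¹) • innerSL ℝ ν).smulRight ν) -
          ((c * (q x)⁻¹) • ContinuousLinearMap.id ℝ _ +
            (c • ((-((q x) ^ 2)⁻¹) • ((fderivInnerCLM ℝ (x, x)).comp
              ((ContinuousLinearMap.id ℝ _).prod (ContinuousLinearMap.id ℝ _))))).smulRight x)) x := by
      rw [hW]; exact h1.sub h2
    have hu2 : HasFDerivAt (fun y => u y ^ 2)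
        (((2 : ℝ) * u x ^ (2 - 1)) • fderiv ℝ u x) x :=
      (hasDerivAt_pow 2 (u x)).comp_hasFDerivAt x (hudiff x).hasFDerivAt
    have hFF : HasFDerivAt F
        (u x ^ 2 • ((((-((d x) ^ 2)⁻¹) • innerSL ℝ ν).smulRight ν) -
            ((c * (q x)⁻¹) • ContinuousLinearMap.id ℝ _ +
              (c • ((-((q x) ^ 2)⁻¹) • ((fderivInnerCLM ℝ (x, x)).comp
                ((ContinuousLinearMap.id ℝ _).prod (ContinuousLinearMap.id ℝ _))))).smulRight x))
          + (((2 : ℝ) * u x ^ (2 - 1)) • fderiv ℝ u x).smulRight (W x)) x := by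
      rw [hF]; exact hu2.smul hWF
    have hgoal : ∑ i, (fderiv ℝ F x) (EuclideanSpace.single i 1) i = tr (fderiv ℝ F x) := rfl
    rw [hgoal, hFF.fderiv]
    rw [tr_add, tr_smul, tr_sub, tr_add, tr_smul, tr_smulRight, tr_smulRight, tr_smulRight, tr_id]
    simp only [ContinuousLinearMap.smul_apply, innerSL_apply_apply, fderivInnerCLM_apply,
      ContinuousLinearMap.comp_apply, ContinuousLinearMap.prod_apply,
      ContinuousLinearMap.id_apply, smul_eq_mul, pow_one]
    have i1 : (inner ℝ ν ν : ℝ) = 1 := by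
      rw [real_inner_self_eq_norm_sq, hν]; norm_num
    have i2 : (inner ℝ x x : ℝ) = q x := by rw [hq]
    rw [i1, i2]
    field_simp
    ring
  -- norm of W at good points
  have hWnorm : ∀ x : EuclideanSpace ℝ (Fin N), 0 < d x →
      ‖W x‖ ^ 2 = ((d x) ^ 2)⁻¹ + (c ^ 2 - 2 * c) * (q x)⁻¹ := by
    intro x hx
    have hd0 : d x ≠ 0 := ne_of_gt hx
    have hq0 : q x ≠ 0 := ne_of_gt (hqpos x hx)
    have hWx : W x = (d x)⁻¹ • ν - (c * (q x)⁻¹) • x := by rw [hW]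
    rw [hWx, norm_sub_sq_real, real_inner_smul_left, real_inner_smul_right]
    simp only [norm_smul, Real.norm_eq_abs, mul_pow, sq_abs, hν]
    have h1 : (inner ℝ ν x : ℝ) = d x := by rw [hd]
    have h2 : ‖x‖ ^ 2 = q x := (hqnorm x).symm
    rw [h1, h2]
    field_simp
    ring
  -- the pointwise inequality
  have hpt : ∀ x : EuclideanSpace ℝ (Fin N),
      (N : ℝ) ^ 2 / 4 * ((u x) ^ 2 / ‖x‖ ^ 2)
        + ∑ i, (fderiv ℝ F x) (EuclideanSpace.single i 1) i ≤ ‖gradient u x‖ ^ 2 := by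
    intro x
    rcases hcover x with hx | hx
    · have hd0 : d x ≠ 0 := ne_of_gt hx
      have hq0 : q x ≠ 0 := ne_of_gt (hqpos x hx)
      have hip : ⟪gradient u x, W x⟫ = (fderiv ℝ u x) (W x) :=
        InnerProductSpace.toDual_symm_apply
      have hsq : (0 : ℝ) ≤ ‖gradient u x - u x • W x‖ ^ 2 := sq_nonneg _
      rw [norm_sub_sq_real, real_inner_smul_right, norm_smul, mul_pow, Real.norm_eq_abs,
        sq_abs, hWnorm x hx] at hsq
      rw [hFderiv x hx]
      have h2 : ‖x‖ ^ 2 = q x := (hqnorm x).symm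
      rw [h2, ← hip]
      have hfin : (N : ℝ) ^ 2 / 4 * (u x ^ 2 / q x)
          + (2 * u x * ⟪gradient u x, W x⟫
            + u x ^ 2 * (-((d x) ^ 2)⁻¹ - c * (q x)⁻¹ * N + 2 * c * (q x)⁻¹))
          = 2 * (u x * ⟪gradient u x, W x⟫)
            - u x ^ 2 * (((d x) ^ 2)⁻¹ + (c ^ 2 - 2 * c) * (q x)⁻¹) := by
        rw [hc]; field_simp; ring
      rw [hfin]
      linarith [hsq]
    · have hux : u x = 0 := hx.self_of_nhds
      have hgrad : gradient u x = 0 := hx.gradient_eq.trans (gradient_const x 0)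
      have hFeq : F =ᶠ[nhds x] (fun _ => (0 : EuclideanSpace ℝ (Fin N))) :=
        hx.mono fun y hy => by simp [hF, hy]
      have hfd : fderiv ℝ F x = 0 := by
        rw [hFeq.fderiv_eq]; exact fderiv_const_apply _
      rw [hux, hfd]
      simp [hgrad]
  -- integrability statements
  have hI1 : Integrable (fun x : EuclideanSpace ℝ (Fin N) => (u x) ^ 2 / ‖x‖ ^ 2) := by
    have hcont : Continuous fun x : EuclideanSpace ℝ (Fin N) => (u x) ^ 2 / ‖x‖ ^ 2 := by
      rw [continuous_iff_continuousAt]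
      intro x
      rcases hcover x with hx | hx
      · have hx0 : x ≠ 0 := by rintro rfl; simp [hd] at hx
        exact ((hu.continuous.pow 2).continuousAt).div
          ((continuous_norm.pow 2).continuousAt)
          (pow_ne_zero _ (norm_ne_zero_iff.mpr hx0))
      · have hev : (fun y : EuclideanSpace ℝ (Fin N) => (u y) ^ 2 / ‖y‖ ^ 2)
            =ᶠ[nhds x] (fun _ => (0 : ℝ)) := hx.mono fun y hy => by simp [hy]
        exact (continuousAt_congr hev).mpr continuousAt_const
    exact hcont.integrable_of_hasCompactSupport
      (HasCompactSupport.intro hcs fun x hx => by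
        simp [image_eq_zero_of_notMem_tsupport hx])
  have hI2 : Integrable (fun x : EuclideanSpace ℝ (Fin N) => ‖gradient u x‖ ^ 2) := by
    have hgc : Continuous fun x : EuclideanSpace ℝ (Fin N) => gradient u x := by
      have hf : Continuous fun x => fderiv ℝ u x := hu.continuous_fderiv (by simp)
      exact ((InnerProductSpace.toDual ℝ (EuclideanSpace ℝ (Fin N))).symm.continuous).comp hf
    exact (hgc.norm.pow 2).integrable_of_hasCompactSupport
      (HasCompactSupport.intro hcs fun x hx => by
        have hgrad : gradient u x = 0 :=
          ((notMem_tsupport_iff_eventuallyEq.mp hx).gradient_eq).trans (gradient_const x 0)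
        simp [hgrad])
  have hIdiv : ∀ i : Fin N, Integrable
      (fun x : EuclideanSpace ℝ (Fin N) => (fderiv ℝ F x) (EuclideanSpace.single i 1) i) := by
    intro i
    have hfc : Continuous fun x => fderiv ℝ F x := hFsm.continuous_fderiv (by simp)
    have hcont : Continuous fun x : EuclideanSpace ℝ (Fin N) =>
        (fderiv ℝ F x) (EuclideanSpace.single i 1) i := by
      have h1 : Continuous fun x : EuclideanSpace ℝ (Fin N) =>
          (fderiv ℝ F x) (EuclideanSpace.single i 1) :=
        (ContinuousLinearMap.apply ℝ _ (EuclideanSpace.single i 1)).continuous.comp hfc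
      exact (EuclideanSpace.proj (𝕜 := ℝ) i).continuous.comp h1
    refine hcont.integrable_of_hasCompactSupport (HasCompactSupport.intro hcs fun x hx => ?_)
    have hFeq : F =ᶠ[nhds x] (fun _ => (0 : EuclideanSpace ℝ (Fin N))) :=
      (notMem_tsupport_iff_eventuallyEq.mp hx).mono fun y hy => by simp [hF, hy]
    rw [hFeq.fderiv_eq]
    simp
  -- the divergence integrates to zero
  have hdiv0 : ∫ x, ∑ i, (fderiv ℝ F x) (EuclideanSpace.single i 1) i = 0 := by
    have hFdiff : Differentiable ℝ F := hFsm.differentiable (by simp)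
    rw [integral_finset_sum Finset.univ (fun i _ => hIdiv i)]
    refine Finset.sum_eq_zero fun i _ => ?_
    set Fi : EuclideanSpace ℝ (Fin N) → ℝ :=
      fun y => EuclideanSpace.proj (𝕜 := ℝ) i (F y) with hFi
    have hFiC : ContDiff ℝ (⊤ : ℕ∞) Fi := (EuclideanSpace.proj (𝕜 := ℝ) i).contDiff.comp hFsm
    have hFicomp : HasCompactSupport Fi :=
      hFc.comp_left (g := EuclideanSpace.proj (𝕜 := ℝ) i) (map_zero _)
    have hFid : Differentiable ℝ Fi := hFiC.differentiable (by simp)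
    have hfderiv_eq : ∀ x, fderiv ℝ Fi x
        = (EuclideanSpace.proj (𝕜 := ℝ) i).comp (fderiv ℝ F x) := fun x =>
      (((EuclideanSpace.proj (𝕜 := ℝ) i).hasFDerivAt).comp x (hFdiff x).hasFDerivAt).fderiv
    have hfc2 : Continuous fun x => fderiv ℝ Fi x := hFiC.continuous_fderiv (by simp)
    obtain ⟨M, hM⟩ := (hFicomp.fderiv (𝕜 := ℝ)).exists_bound_of_continuous hfc2
    have hlip : LipschitzWith M.toNNReal Fi :=
      lipschitzWith_of_nnnorm_fderiv_le hFid fun x => by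
        rw [← Real.toNNReal_coe (r := ‖fderiv ℝ Fi x‖₊)] <;>
        · exact_mod_cast Real.toNNReal_mono (hM x)
    have h0 := integral_lineDeriv_zero hlip hFicomp (EuclideanSpace.single i 1)
    have hptw : ∀ x, lineDeriv ℝ Fi x (EuclideanSpace.single i 1)
        = (fderiv ℝ F x) (EuclideanSpace.single i 1) i := by
      intro x
      rw [(hFid x).lineDeriv_eq_fderiv, hfderiv_eq x]
      simp
    rw [← h0]
    exact integral_congr_ae (Filter.Eventually.of_forall fun x => (hptw x).symm)
  -- put the pieces together
  calc ((N : ℝ) ^ 2 / 4) * ∫ x, (u x) ^ 2 / ‖x‖ ^ 2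
      = ∫ x, ((N : ℝ) ^ 2 / 4 * ((u x) ^ 2 / ‖x‖ ^ 2)
          + ∑ i, (fderiv ℝ F x) (EuclideanSpace.single i 1) i) := by
        rw [integral_add (hI1.const_mul _) (integrable_finset_sum _ fun i _ => hIdiv i)]
        rw [integral_const_mul, hdiv0, add_zero]
    _ ≤ ∫ x, ‖gradient u x‖ ^ 2 := by
        refine integral_mono ((hI1.const_mul _).add
          (integrable_finset_sum _ fun i _ => hIdiv i)) hI2 hpt
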